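/- arXiv:2504.11859 — 5 statements merged into one kernel-verified Lean document; each statement's English description precedes it below -/
import Mathlib

section
/- Let S_P ⊆ (Fin m → Γ_P) and S_Q ⊆ (Fin n → Γ_Q) with a bijection R : S_Q ≃ S_P. Suppose g : Fin n → Option (Fin m), f : Fin n → Γ_P → Γ_Q with each f j injective, such that for all s ∈ S_Q: if g j = some i then s j = f j ((R s) i), and if g j = none then s j = v j for a fixed v : Fin n → Γ_Q. Assume additionally that g is 'surjective onto used indices': for every i : Fin m there exists j with g j = some i. If a clue c_P : Fin m → Option Γ_P uniquely determines an element of S_P (i.e., there is exactly one x_P ∈ S_P consistent with c_P), then the clue c_Q : Fin n → Option Γ_Q defined by c_Q j = Option.map (f j) (Option.bind (g j) c_P) if j is the minimal index with g j = some i, and none otherwise, uniquely determines an element of S_Q, and its size equals the size of c_P. -/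
open scoped Classical

def Satisfies {m : ℕ} {Γ : Type*} (c : Fin m → Option Γ) (s : Fin m → Γ) : Prop :=
  ∀ i a, c i = some a → s i = a

noncomputable def clueSize {m : ℕ} {Γ : Type*} (c : Fin m → Option Γ) : ℕ :=
  Set.ncard {i | c i ≠ none}

def UniqDetAt {m : ℕ} {Γ : Type*} (S : Set (Fin m → Γ)) (c : Fin m → Option Γ)
    (s : Fin m → Γ) : Prop :=
  s ∈ S ∧ Satisfies c s ∧ ∀ t ∈ S, Satisfies c t → t = s

def UniqDet {m : ℕ} {Γ : Type*} (S : Set (Fin m → Γ)) (c : Fin m → Option Γ) : Prop :=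
  ∃ s, UniqDetAt S c s

/-! Sending each `i` to its first copy `j` (the least `j` with `g j = some i`) embeds `Fin m`
into `Fin n`, and `cQ` is `cP` transported along this embedding through the injections `f j`.
Hence the clues have the same size, and a solution `s` of `Q` satisfies `cQ` exactly when `R s`
satisfies `cP`, so the bijection `R` transports the unique solution. -/

theorem existsUnique_mem_and_congr {α β : Type*} {S : Set α} {T : Set β}
    {p : α → Prop} {q : β → Prop} (R : S ≃ T) (h : ∀ s : S, p s ↔ q (R s)) :
    (∃! a, a ∈ S ∧ p a) ↔ ∃! b, b ∈ T ∧ q b :=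
  Equiv.existsUnique_subtype_congr <|
    (Equiv.subtypeSubtypeEquivSubtypeInter (· ∈ S) p).symm.trans <|
      (R.subtypeEquiv h).trans (Equiv.subtypeSubtypeEquivSubtypeInter (· ∈ T) q)

section FirstIndex

variable {ι α : Type*} [LinearOrder ι] [WellFoundedLT ι] (g : ι → Option α)
  (hg : ∀ a, ∃ j, g j = some a)

noncomputable def firstIndex (a : α) : ι :=
  wellFounded_lt.min {j | g j = some a} (hg a)

theorem firstIndex_spec (a : α) : g (firstIndex g hg a) = some a :=
  wellFounded_lt.min_mem {j | g j = some a} (hg a)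

theorem firstIndex_injective : Function.Injective (firstIndex g hg) := fun a b hab =>
  Option.some_injective α <| by rw [← firstIndex_spec g hg a, hab, firstIndex_spec g hg b]

theorem isFirst_iff_eq_firstIndex {j : ι} {a : α} :
    (g j = some a ∧ ∀ j' < j, g j' ≠ some a) ↔ j = firstIndex g hg a := by
  constructor
  · rintro ⟨hj, hfirst⟩
    refine le_antisymm (not_lt.1 fun hlt => hfirst _ hlt (firstIndex_spec g hg a)) ?_
    exact not_lt.1 (wellFounded_lt.not_lt_min {j | g j = some a} hj)
  · rintro rfl
    exact ⟨firstIndex_spec g hg a, fun j' hlt hj' =>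
      wellFounded_lt.not_lt_min {j | g j = some a} hj' hlt⟩

end FirstIndex

section ClueTransfer

variable {m n : ℕ} {ΓP ΓQ : Type*} {e : Fin m → Fin n} {φ : Fin m → ΓP → ΓQ}
  {cP : Fin m → Option ΓP} {cQ : Fin n → Option ΓQ}

theorem satisfies_iff_of_embedding (hφ : ∀ i, Function.Injective (φ i))
    (hcQ : ∀ i, cQ (e i) = (cP i).map (φ i)) (hoff : ∀ j ∉ Set.range e, cQ j = none)
    {s : Fin n → ΓQ} {x : Fin m → ΓP} (hsx : ∀ i, s (e i) = φ i (x i)) :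
    Satisfies cQ s ↔ Satisfies cP x := by
  constructor
  · intro hs i a ha
    exact hφ i ((hsx i).symm.trans (hs (e i) _ (by rw [hcQ, ha]; rfl)))
  · intro hx j b hb
    by_cases hj : j ∈ Set.range e
    · obtain ⟨i, rfl⟩ := hj
      rw [hcQ] at hb
      obtain ⟨a, ha, rfl⟩ := Option.map_eq_some_iff.1 hb
      rw [hsx, hx i a ha]
    · simp [hoff j hj] at hb

theorem clueSize_eq_of_embedding (he : Function.Injective e)
    (hcQ : ∀ i, cQ (e i) = (cP i).map (φ i)) (hoff : ∀ j ∉ Set.range e, cQ j = none) :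
    clueSize cQ = clueSize cP := by
  have hsupp : {j | cQ j ≠ none} = e '' {i | cP i ≠ none} := by
    ext j
    by_cases hj : j ∈ Set.range e
    · obtain ⟨i, rfl⟩ := hj
      simp [hcQ, he.eq_iff]
    · simp only [Set.mem_ofPred_eq, hoff j hj, ne_eq, not_true_eq_false, false_iff]
      rintro ⟨i, -, rfl⟩
      exact hj ⟨i, rfl⟩
  rw [clueSize, clueSize, hsupp, Set.ncard_image_of_injective _ he]

end ClueTransfer

theorem stmt2_general {m n : ℕ} {ΓP ΓQ : Type*}
    (SP : Set (Fin m → ΓP)) (SQ : Set (Fin n → ΓQ))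
    (R : ↥SQ ≃ ↥SP)
    (g : Fin n → Option (Fin m)) (f : Fin n → ΓP → ΓQ)
    (hinj : ∀ j, Function.Injective (f j))
    (hdep : ∀ (s : ↥SQ) (j : Fin n) (i : Fin m),
      g j = some i → (s : Fin n → ΓQ) j = f j ((R s : Fin m → ΓP) i))
    (hsurj : ∀ i : Fin m, ∃ j : Fin n, g j = some i)
    (cP : Fin m → Option ΓP)
    (hcP : ∃! xP, xP ∈ SP ∧ Satisfies cP xP)
    (cQ : Fin n → Option ΓQ)
    (hcQ : ∀ j : Fin n,
      cQ j = if (∃ i : Fin m, g j = some i ∧ ∀ j' : Fin n, j' < j → g j' ≠ some i)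
        then ((g j).bind cP).map (f j) else none) :
    (∃! xQ, xQ ∈ SQ ∧ Satisfies cQ xQ) ∧ clueSize cQ = clueSize cP := by
  set e := firstIndex g hsurj
  have hfirst : ∀ j, (∃ i, g j = some i ∧ ∀ j' < j, g j' ≠ some i) ↔ j ∈ Set.range e := fun j =>
    exists_congr fun i => (isFirst_iff_eq_firstIndex g hsurj).trans eq_comm
  have hcQ_range : ∀ i, cQ (e i) = (cP i).map (f (e i)) := fun i => by
    rw [hcQ, if_pos ((hfirst _).2 ⟨i, rfl⟩), firstIndex_spec g hsurj i]
    rfl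
  have hcQ_off : ∀ j ∉ Set.range e, cQ j = none := fun j hj => by
    rw [hcQ, if_neg (mt (hfirst j).1 hj)]
  refine ⟨(existsUnique_mem_and_congr R fun s => ?_).2 hcP,
    clueSize_eq_of_embedding (firstIndex_injective g hsurj) hcQ_range hcQ_off⟩
  exact satisfies_iff_of_embedding (fun i => hinj (e i)) hcQ_range hcQ_off
    fun i => hdep s (e i) i (firstIndex_spec g hsurj i)

theorem stmt2 {m n : ℕ} {ΓP ΓQ : Type*}
    (SP : Set (Fin m → ΓP)) (SQ : Set (Fin n → ΓQ))
    (R : ↥SQ ≃ ↥SP)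
    (g : Fin n → Option (Fin m)) (f : Fin n → ΓP → ΓQ) (v : Fin n → ΓQ)
    (hinj : ∀ j, Function.Injective (f j))
    (hdep : ∀ (s : ↥SQ) (j : Fin n) (i : Fin m),
      g j = some i → (s : Fin n → ΓQ) j = f j ((R s : Fin m → ΓP) i))
    (hconst : ∀ (s : ↥SQ) (j : Fin n), g j = none → (s : Fin n → ΓQ) j = v j)
    (hsurj : ∀ i : Fin m, ∃ j : Fin n, g j = some i)
    (cP : Fin m → Option ΓP)
    (hcP : ∃! xP, xP ∈ SP ∧ Satisfies cP xP)
    (cQ : Fin n → Option ΓQ)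
    (hcQ : ∀ j : Fin n,
      cQ j = if (∃ i : Fin m, g j = some i ∧ ∀ j' : Fin n, j' < j → g j' ≠ some i)
        then ((g j).bind cP).map (f j) else none) :
    (∃! xQ, xQ ∈ SQ ∧ Satisfies cQ xQ) ∧ clueSize cQ = clueSize cP :=
  stmt2_general SP SQ R g f hinj hdep hsurj cP hcP cQ hcQ
end

section
/- Let S_P ⊆ (Fin m → Γ_P) and S_Q ⊆ (Fin n → Γ_Q) with a bijection R : S_Q ≃ S_P, and g : Fin n → Option (Fin m), f : Fin n → Γ_P → Γ_Q with each f j injective, such that for all s ∈ S_Q: if g j = some i then s j = f j ((R s) i), and if g j = none then s j = v j for fixed v. If there exists a clue c_Q of size at most k uniquely determining an element of S_Q, then there exists a clue c_P of size at most k uniquely determining an element of S_P. -/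
open scoped Classical

/-!
Let `s` be the solution of `S_Q` singled out by `c_Q`. Reveal in `R s` exactly the cells `i`
that some clued cell `j` of `c_Q` depends on (`g j = some i`); there are at most as many of them
as clued cells. Any `t ∈ S_P` agreeing with `R s` there has a preimage `R⁻¹ t` that agrees with
`s` on every clued cell (the dependent cells through `f j`, the constant ones through `v`), so
`R⁻¹ t = s` and `t = R s`.
-/

noncomputable def clueOn {m : ℕ} {Γ : Type*} (D : Set (Fin m)) (s : Fin m → Γ) :
    Fin m → Option Γ :=
  fun i => if i ∈ D then some (s i) else none

section clueOn

variable {m : ℕ} {Γ : Type*} (D : Set (Fin m)) (s : Fin m → Γ)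

theorem satisfies_clueOn_iff {t : Fin m → Γ} :
    Satisfies (clueOn D s) t ↔ ∀ i ∈ D, t i = s i := by
  simp [Satisfies, clueOn]

theorem satisfies_clueOn_self : Satisfies (clueOn D s) s :=
  (satisfies_clueOn_iff D s).2 fun _ _ => rfl

theorem clueSize_clueOn : clueSize (clueOn D s) = D.ncard := by
  simp [clueSize, clueOn]

end clueOn

theorem ncard_setOf_exists_eq_some_le {m n : ℕ} (g : Fin n → Option (Fin m)) (A : Set (Fin n)) :
    {i | ∃ j ∈ A, g j = some i}.ncard ≤ A.ncard :=
  calc {i | ∃ j ∈ A, g j = some i}.ncard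
      = (some '' {i | ∃ j ∈ A, g j = some i}).ncard :=
        (Set.ncard_image_of_injective _ (Option.some_injective _)).symm
    _ ≤ (g '' A).ncard :=
        Set.ncard_le_ncard (by rintro _ ⟨i, ⟨j, hj, hji⟩, rfl⟩; exact ⟨j, hj, hji⟩)
    _ ≤ A.ncard := Set.ncard_image_le A.toFinite

theorem apply_eq_of_forall_eq_some {m n : ℕ} {ΓP ΓQ : Type*}
    {SP : Set (Fin m → ΓP)} {SQ : Set (Fin n → ΓQ)} {R : ↥SQ ≃ ↥SP}
    {g : Fin n → Option (Fin m)} {f : Fin n → ΓP → ΓQ} {v : Fin n → ΓQ}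
    (hdep : ∀ (s : ↥SQ) (j : Fin n) (i : Fin m),
      g j = some i → (s : Fin n → ΓQ) j = f j ((R s : Fin m → ΓP) i))
    (hconst : ∀ (s : ↥SQ) (j : Fin n), g j = none → (s : Fin n → ΓQ) j = v j)
    {s u : ↥SQ} {j : Fin n}
    (hagree : ∀ i, g j = some i → (R u : Fin m → ΓP) i = (R s : Fin m → ΓP) i) :
    (u : Fin n → ΓQ) j = (s : Fin n → ΓQ) j := by
  cases hgj : g j with
  | none => rw [hconst u j hgj, hconst s j hgj]
  | some i => rw [hdep u j i hgj, hdep s j i hgj, hagree i hgj]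

theorem stmt3_general {m n : ℕ} {ΓP ΓQ : Type*}
    (SP : Set (Fin m → ΓP)) (SQ : Set (Fin n → ΓQ))
    (R : ↥SQ ≃ ↥SP)
    (g : Fin n → Option (Fin m)) (f : Fin n → ΓP → ΓQ) (v : Fin n → ΓQ)
    (hdep : ∀ (s : ↥SQ) (j : Fin n) (i : Fin m),
      g j = some i → (s : Fin n → ΓQ) j = f j ((R s : Fin m → ΓP) i))
    (hconst : ∀ (s : ↥SQ) (j : Fin n), g j = none → (s : Fin n → ΓQ) j = v j)
    (k : ℕ)
    (hQ : ∃ cQ : Fin n → Option ΓQ, clueSize cQ ≤ k ∧ UniqDet SQ cQ) :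
    ∃ cP : Fin m → Option ΓP, clueSize cP ≤ k ∧ UniqDet SP cP := by
  obtain ⟨cQ, hsize, s₀, hs₀, hs₀sat, hs₀uniq⟩ := hQ
  set s : ↥SQ := ⟨s₀, hs₀⟩
  set D := {i | ∃ j ∈ {j | cQ j ≠ none}, g j = some i}
  have hsizeP : clueSize (clueOn D (R s : Fin m → ΓP)) ≤ k :=
    (clueSize_clueOn D _).trans_le ((ncard_setOf_exists_eq_some_le g _).trans hsize)
  refine ⟨clueOn D (R s : Fin m → ΓP), hsizeP, R s, (R s).2, satisfies_clueOn_self D _,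
    fun t ht htsat => ?_⟩
  set u := R.symm ⟨t, ht⟩
  have hagree : ∀ i ∈ D, (R u : Fin m → ΓP) i = (R s : Fin m → ΓP) i := by
    simpa [u] using (satisfies_clueOn_iff D _).1 htsat
  have husat : Satisfies cQ (u : Fin n → ΓQ) := fun j b hb => by
    rw [apply_eq_of_forall_eq_some hdep hconst fun i hi => hagree i ⟨j, by simp [hb], hi⟩]
    exact hs₀sat j b hb
  have hus : u = s := Subtype.ext (hs₀uniq u u.2 husat)
  simpa [u] using congrArg (fun w => (R w : Fin m → ΓP)) hus

theorem stmt3 {m n : ℕ} {ΓP ΓQ : Type*}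
    (SP : Set (Fin m → ΓP)) (SQ : Set (Fin n → ΓQ))
    (R : ↥SQ ≃ ↥SP)
    (g : Fin n → Option (Fin m)) (f : Fin n → ΓP → ΓQ) (v : Fin n → ΓQ)
    (hinj : ∀ j, Function.Injective (f j))
    (hdep : ∀ (s : ↥SQ) (j : Fin n) (i : Fin m),
      g j = some i → (s : Fin n → ΓQ) j = f j ((R s : Fin m → ΓP) i))
    (hconst : ∀ (s : ↥SQ) (j : Fin n), g j = none → (s : Fin n → ΓQ) j = v j)
    (k : ℕ)
    (hQ : ∃ cQ : Fin n → Option ΓQ, clueSize cQ ≤ k ∧ UniqDet SQ cQ) :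
    ∃ cP : Fin m → Option ΓP, clueSize cP ≤ k ∧ UniqDet SP cP :=
  stmt3_general SP SQ R g f v hdep hconst k hQ
end

section
/- Let S ⊆ (Fin m → Γ) and let σ : Fin n → Fin m be any function with S' = {s ∘ σ | s ∈ S} such that the map s ↦ s ∘ σ is injective on S. If σ is surjective, then for every k, S admits a uniquifying clue of size ≤ k if and only if S' does. -/
open scoped Classical

/-!
A clue consistent with `s` is determined by its support, so `S` has a uniquifying clue of size
`≤ k` iff some `s ∈ S` is the only member of `S` agreeing with it on a set `A` of at most `k`
positions. Precomposition with `σ` turns agreement on `B ⊆ Fin n` into agreement on `σ '' B`,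
and injectivity on `S` makes `t ↦ t ∘ σ` a bijection from `S` onto `S'`. So a set of positions
for `S'` pushes forward along `σ` without growing, and one for `S` pulls back along a right
inverse of `σ` without growing.
-/

section Clue

variable {m : ℕ} {Γ : Type*}

noncomputable def revealOn (A : Set (Fin m)) (s : Fin m → Γ) : Fin m → Option Γ :=
  fun i => if i ∈ A then some (s i) else none

def DeterminedOn (S : Set (Fin m → Γ)) (A : Set (Fin m)) (s : Fin m → Γ) : Prop :=
  s ∈ S ∧ ∀ t ∈ S, Set.EqOn t s A → t = s

theorem satisfies_iff_eqOn {c : Fin m → Option Γ} {s : Fin m → Γ} (hs : Satisfies c s)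
    (t : Fin m → Γ) : Satisfies c t ↔ Set.EqOn t s {i | c i ≠ none} := by
  constructor
  · intro ht i hi
    obtain ⟨a, ha⟩ := Option.ne_none_iff_exists'.1 hi
    rw [ht i a ha, hs i a ha]
  · intro ht i a ha
    rw [ht (by simp [ha]), hs i a ha]

theorem satisfies_revealOn_iff (A : Set (Fin m)) (s t : Fin m → Γ) :
    Satisfies (revealOn A s) t ↔ Set.EqOn t s A := by
  constructor
  · intro ht i hi
    exact ht i (s i) (if_pos hi)
  · intro ht i a ha
    unfold revealOn at ha
    split_ifs at ha with hi
    rw [ht hi, Option.some_inj.1 ha]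

theorem clueSize_revealOn (A : Set (Fin m)) (s : Fin m → Γ) :
    clueSize (revealOn A s) = A.ncard := by
  unfold clueSize revealOn
  congr 1
  ext i
  by_cases hi : i ∈ A <;> simp [hi]

theorem exists_clueSize_le_uniqDet_iff (S : Set (Fin m → Γ)) (k : ℕ) :
    (∃ c : Fin m → Option Γ, clueSize c ≤ k ∧ UniqDet S c) ↔
      ∃ A : Set (Fin m), ∃ s, A.ncard ≤ k ∧ DeterminedOn S A s := by
  constructor
  · rintro ⟨c, hk, s, hsS, hsc, huniq⟩
    exact ⟨_, s, hk, hsS, fun t htS hts => huniq t htS ((satisfies_iff_eqOn hsc t).2 hts)⟩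
  · rintro ⟨A, s, hk, hsS, huniq⟩
    refine ⟨revealOn A s, (clueSize_revealOn A s).symm ▸ hk, s, hsS,
      (satisfies_revealOn_iff A s s).2 (Set.eqOn_refl s A), fun t htS ht => ?_⟩
    exact huniq t htS ((satisfies_revealOn_iff A s t).1 ht)

end Clue

theorem determinedOn_image_comp_iff {m n : ℕ} {Γ : Type*} {S : Set (Fin m → Γ)}
    {σ : Fin n → Fin m} (hinjOn : Set.InjOn (fun s : Fin m → Γ => s ∘ σ) S)
    {s : Fin m → Γ} (hs : s ∈ S) (B : Set (Fin n)) :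
    DeterminedOn ((fun s : Fin m → Γ => s ∘ σ) '' S) B (s ∘ σ) ↔ DeterminedOn S (σ '' B) s := by
  simp only [DeterminedOn, Set.mem_image_of_mem _ hs, Set.forall_mem_image, true_and, hs]
  refine forall₂_congr fun t ht => ?_
  rw [Set.eqOn_comp_right_iff, hinjOn.eq_iff ht hs]

theorem Function.Surjective.exists_image_eq_ncard_eq {α β : Type*} {f : α → β}
    (hf : Function.Surjective f) (A : Set β) : ∃ B : Set α, B.ncard = A.ncard ∧ f '' B = A := by
  obtain ⟨g, hg⟩ := hf.hasRightInverse
  exact ⟨g '' A, Set.ncard_image_of_injective A hg.injective, by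
    simp only [Set.image_image, hg _, Set.image_id']⟩

theorem stmt11 {m n : ℕ} {Γ : Type*} (S : Set (Fin m → Γ)) (σ : Fin n → Fin m)
    (hinjOn : Set.InjOn (fun s : Fin m → Γ => s ∘ σ) S)
    (hσ : Function.Surjective σ) :
    ∀ k : ℕ,
      (∃ c : Fin m → Option Γ, clueSize c ≤ k ∧ UniqDet S c) ↔
      (∃ c : Fin n → Option Γ, clueSize c ≤ k ∧
        UniqDet ((fun s : Fin m → Γ => s ∘ σ) '' S) c) := by
  intro k
  rw [exists_clueSize_le_uniqDet_iff, exists_clueSize_le_uniqDet_iff]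
  constructor
  · rintro ⟨A, s, hk, hdet⟩
    obtain ⟨B, hB, rfl⟩ := hσ.exists_image_eq_ncard_eq A
    exact ⟨B, s ∘ σ, hB ▸ hk, (determinedOn_image_comp_iff hinjOn hdet.1 B).2 hdet⟩
  · rintro ⟨B, _, hk, ⟨s, hs, rfl⟩, huniq⟩
    exact ⟨σ '' B, s, (Set.ncard_image_le (Set.toFinite B)).trans hk,
      (determinedOn_image_comp_iff hinjOn hs B).1 ⟨⟨s, hs, rfl⟩, huniq⟩⟩
end

section
/- Let S_P, S_Q and R : S_Q ≃ S_P be as in the meta-theorem with structure maps g, f, v, where each f j is injective, and assume every i : Fin m is in the range of g. If x_Q, x_Q' ∈ S_Q both satisfy the transferred clue c_Q (constructed from a clue c_P by setting c_Q j = some (f j a) at the minimal j with g j = some i whenever c_P i = some a), then R x_Q and R x_Q' both satisfy c_P. -/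
open scoped Classical

/-!
Every clue position `i` of `cP` is read off at the first `j` with `g j = some i`, where `cQ`
asks for `f j a`. A solution `s` of `cQ` has `s j = f j ((R s) i)`, so injectivity of `f j`
gives `(R s) i = a`.
-/

theorem exists_first_eq_some {m n : ℕ} (g : Fin n → Option (Fin m)) {i : Fin m}
    (hi : ∃ j, g j = some i) :
    ∃ j, g j = some i ∧ ∀ j' < j, g j' ≠ some i := by
  obtain ⟨j, hj, hmin⟩ := wellFounded_lt.has_min {j | g j = some i} hi
  exact ⟨j, hj, fun j' hlt hj' => hmin j' hj' hlt⟩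

theorem satisfies_of_satisfies_transferred {m n : ℕ} {ΓP ΓQ : Type*}
    (g : Fin n → Option (Fin m)) (f : Fin n → ΓP → ΓQ) (hinj : ∀ j, Function.Injective (f j))
    (hsurj : ∀ i : Fin m, ∃ j : Fin n, g j = some i)
    (cP : Fin m → Option ΓP) (cQ : Fin n → Option ΓQ)
    (hcQ : ∀ j : Fin n,
      cQ j = if (∃ i : Fin m, g j = some i ∧ ∀ j' : Fin n, j' < j → g j' ≠ some i)
        then ((g j).bind cP).map (f j) else none)
    {s : Fin n → ΓQ} {t : Fin m → ΓP} (hst : ∀ j i, g j = some i → s j = f j (t i))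
    (hs : Satisfies cQ s) : Satisfies cP t := by
  intro i a hia
  obtain ⟨j, hj, hfirst⟩ := exists_first_eq_some g (hsurj i)
  have hcQj : cQ j = some (f j a) := by
    rw [hcQ j, if_pos ⟨i, hj, hfirst⟩, hj, Option.bind_some, hia, Option.map_some]
  exact hinj j ((hst j i hj).symm.trans (hs j _ hcQj))

theorem stmt18_general {m n : ℕ} {ΓP ΓQ : Type*}
    (SP : Set (Fin m → ΓP)) (SQ : Set (Fin n → ΓQ))
    (R : ↥SQ ≃ ↥SP)
    (g : Fin n → Option (Fin m)) (f : Fin n → ΓP → ΓQ)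
    (hinj : ∀ j, Function.Injective (f j))
    (hdep : ∀ (s : ↥SQ) (j : Fin n) (i : Fin m),
      g j = some i → (s : Fin n → ΓQ) j = f j ((R s : Fin m → ΓP) i))
    (hsurj : ∀ i : Fin m, ∃ j : Fin n, g j = some i)
    (cP : Fin m → Option ΓP) (cQ : Fin n → Option ΓQ)
    (hcQ : ∀ j : Fin n,
      cQ j = if (∃ i : Fin m, g j = some i ∧ ∀ j' : Fin n, j' < j → g j' ≠ some i)
        then ((g j).bind cP).map (f j) else none)
    (xQ xQ' : ↥SQ)
    (hxQ : Satisfies cQ (xQ : Fin n → ΓQ))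
    (hxQ' : Satisfies cQ (xQ' : Fin n → ΓQ)) :
    Satisfies cP (R xQ : Fin m → ΓP) ∧ Satisfies cP (R xQ' : Fin m → ΓP) :=
  ⟨satisfies_of_satisfies_transferred g f hinj hsurj cP cQ hcQ (hdep xQ) hxQ,
    satisfies_of_satisfies_transferred g f hinj hsurj cP cQ hcQ (hdep xQ') hxQ'⟩

theorem stmt18 {m n : ℕ} {ΓP ΓQ : Type*}
    (SP : Set (Fin m → ΓP)) (SQ : Set (Fin n → ΓQ))
    (R : ↥SQ ≃ ↥SP)
    (g : Fin n → Option (Fin m)) (f : Fin n → ΓP → ΓQ) (v : Fin n → ΓQ)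
    (hinj : ∀ j, Function.Injective (f j))
    (hdep : ∀ (s : ↥SQ) (j : Fin n) (i : Fin m),
      g j = some i → (s : Fin n → ΓQ) j = f j ((R s : Fin m → ΓP) i))
    (hconst : ∀ (s : ↥SQ) (j : Fin n), g j = none → (s : Fin n → ΓQ) j = v j)
    (hsurj : ∀ i : Fin m, ∃ j : Fin n, g j = some i)
    (cP : Fin m → Option ΓP) (cQ : Fin n → Option ΓQ)
    (hcQ : ∀ j : Fin n,
      cQ j = if (∃ i : Fin m, g j = some i ∧ ∀ j' : Fin n, j' < j → g j' ≠ some i)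
        then ((g j).bind cP).map (f j) else none)
    (xQ xQ' : ↥SQ)
    (hxQ : Satisfies cQ (xQ : Fin n → ΓQ))
    (hxQ' : Satisfies cQ (xQ' : Fin n → ΓQ)) :
    Satisfies cP (R xQ : Fin m → ΓP) ∧ Satisfies cP (R xQ' : Fin m → ΓP) :=
  stmt18_general SP SQ R g f hinj hdep hsurj cP cQ hcQ xQ xQ' hxQ hxQ'
end

section
/- Let S_P, S_Q, R, g, f as in the meta-theorem (each f j injective, s j = f j ((R s) i) when g j = some i). Given a clue c_Q for S_Q, define c_P : Fin m → Option Γ_P by: c_P i = some ((f j).invFun b) if there exists j with g j = some i and c_Q j = some b (choosing one such j), and none otherwise. Then every s ∈ S_Q satisfying c_Q has R s satisfying c_P, and size c_P ≤ size c_Q. -/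
open scoped Classical

/- On a position `j` with `g j = some i`, a solution `s` of `S_Q` stores `f j` applied
to the `i`-th entry of `R s`; since `f j` is injective, `invFun (f j)` recovers that entry from a
clue value, so the pulled-back clue is satisfied. Each clued position `i` of `c_P` comes from a
clued position `j` of `c_Q` with `g j = some i`, so `g` maps the clued positions of `c_Q` onto a
set containing all `some i` with `i` clued in `c_P`. -/

theorem Satisfies.of_forall_eq_invFun {m n : ℕ} {ΓP ΓQ : Type*} [Nonempty ΓP]
    {g : Fin n → Option (Fin m)} {f : Fin n → ΓP → ΓQ} (hinj : ∀ j, Function.Injective (f j))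
    {cQ : Fin n → Option ΓQ} {cP : Fin m → Option ΓP}
    (hcP : ∀ i a, cP i = some a →
      ∃ j b, g j = some i ∧ cQ j = some b ∧ a = Function.invFun (f j) b)
    {s : Fin n → ΓQ} {t : Fin m → ΓP} (hdep : ∀ j i, g j = some i → s j = f j (t i))
    (hs : Satisfies cQ s) : Satisfies cP t := by
  intro i a ha
  obtain ⟨j, b, hg, hb, rfl⟩ := hcP i a ha
  have hfb : f j (t i) = b := (hdep j i hg).symm.trans (hs j b hb)
  rw [← hfb]
  exact (Function.leftInverse_invFun (hinj j) (t i)).symm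

theorem clueSize_le_of_forall_exists {m n : ℕ} {ΓP ΓQ : Type*} (g : Fin n → Option (Fin m))
    {cQ : Fin n → Option ΓQ} {cP : Fin m → Option ΓP}
    (h : ∀ i, cP i ≠ none → ∃ j, g j = some i ∧ cQ j ≠ none) :
    clueSize cP ≤ clueSize cQ := by
  have hsub : some '' {i | cP i ≠ none} ⊆ g '' {j | cQ j ≠ none} := by
    rintro _ ⟨i, hi, rfl⟩
    obtain ⟨j, hg, hj⟩ := h i hi
    exact ⟨j, hj, hg⟩
  calc clueSize cP = (some '' {i | cP i ≠ none}).ncard :=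
        (Set.ncard_image_of_injective _ (Option.some_injective _)).symm
    _ ≤ (g '' {j | cQ j ≠ none}).ncard := Set.ncard_le_ncard hsub
    _ ≤ clueSize cQ := Set.ncard_image_le

theorem stmt19 {m n : ℕ} {ΓP ΓQ : Type*} [Nonempty ΓP]
    (SP : Set (Fin m → ΓP)) (SQ : Set (Fin n → ΓQ))
    (R : ↥SQ ≃ ↥SP)
    (g : Fin n → Option (Fin m)) (f : Fin n → ΓP → ΓQ)
    (hinj : ∀ j, Function.Injective (f j))
    (hdep : ∀ (s : ↥SQ) (j : Fin n) (i : Fin m),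
      g j = some i → (s : Fin n → ΓQ) j = f j ((R s : Fin m → ΓP) i))
    (cQ : Fin n → Option ΓQ) (cP : Fin m → Option ΓP)
    (hcP : ∀ i : Fin m,
      (∃ j : Fin n, ∃ b : ΓQ, g j = some i ∧ cQ j = some b ∧
        cP i = some (Function.invFun (f j) b)) ∨
      (cP i = none ∧ ∀ j : Fin n, g j = some i → cQ j = none)) :
    (∀ s : ↥SQ, Satisfies cQ (s : Fin n → ΓQ) →
      Satisfies cP (R s : Fin m → ΓP)) ∧
    clueSize cP ≤ clueSize cQ := by
  have hsome : ∀ i a, cP i = some a →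
      ∃ j b, g j = some i ∧ cQ j = some b ∧ a = Function.invFun (f j) b := by
    intro i a ha
    rcases hcP i with ⟨j, b, hg, hb, hi⟩ | ⟨hi, -⟩
    · exact ⟨j, b, hg, hb, Option.some_injective _ (ha.symm.trans hi)⟩
    · exact absurd (ha.symm.trans hi) (Option.some_ne_none a)
  refine ⟨fun s => Satisfies.of_forall_eq_invFun hinj hsome (hdep s), ?_⟩
  refine clueSize_le_of_forall_exists g fun i hi => ?_
  obtain ⟨a, ha⟩ := Option.ne_none_iff_exists'.mp hi
  obtain ⟨j, b, hg, hb, -⟩ := hsome i a ha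
  exact ⟨j, hg, hb ▸ Option.some_ne_none b⟩
end
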